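/- Let H be a Hopf algebra with bijective antipode, and let X and Y be braided symmetric left–left Yetter–Drinfeld H-module algebras. Then the map φ: X⋈Y → Y⋈X defined by φ(x⋈y) = (x_{(-1)}▷y) ⋈ x_{(0)} is an isomorphism of Yetter–Drinfeld H-module algebras: it is an algebra map, an H-module map, and satisfies δ(φ(x⋈y)) = (id⊗φ)(δ(x⋈y)). -/

import Mathlib

/-!
`φ` is the Yetter–Drinfeld braiding `c_{X,Y}`. It is inverted by
`y ⋈ x ↦ x₍₀₎ ⋈ (S⁻¹(x₍₋₁₎) ▷ y)`, by coassociativity and `g₍₂₎ S⁻¹(g₍₁₎) = S⁻¹(g₍₂₎) g₍₁₎ = ε(g) 1`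
(apply the anti-multiplicative, injective `S`); `H`-linearity and colinearity of `c_{X,Y}` are the
Yetter–Drinfeld conditions of `X` and of `Y`.

For multiplicativity, braided symmetry says that this inverse is `c_{Y,X}`, so
`(x ⋈ y)(v ⋈ u) = x v₍₀₎ ⋈ (S⁻¹(v₍₋₁₎) ▷ y) u`. Pulling `c_{X,Y}` through left multiplication
by `x` and using `g₍₂₎ ▷ ((S⁻¹(g₍₁₎) ▷ y) u) = y (g ▷ u)`, both `φ((x ⋈ y)(v ⋈ u))` and
`φ(x ⋈ y) φ(v ⋈ u)` become `x₍₋₁₎ ▷ (y (v₍₋₁₎ ▷ u)) ⋈ x₍₀₎ v₍₀₎`.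
-/

open TensorProduct LinearMap

noncomputable section

section AbstractLayer

universe u v w

variable (K : Type u) [Field K]

/-- Data of an "algebra–coalgebra object" (e.g. a bialgebra such as a Drinfeld double),
recorded as plain linear-map data. -/
structure GData (A : Type v) [AddCommGroup A] [Module K A] where
  mul : A →ₗ[K] A →ₗ[K] A
  one : A
  comul : A →ₗ[K] A ⊗[K] A
  counit : A →ₗ[K] K

/-- Data of an algebra `X` together with an action and a coaction of `A`:
the raw data underlying a (left–left) Yetter–Drinfeld module algebra. -/
structure XData (A : Type v) (X : Type w) [AddCommGroup A] [Module K A]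
    [AddCommGroup X] [Module K X] where
  mul : X →ₗ[K] X →ₗ[K] X
  one : X
  act : A →ₗ[K] X →ₗ[K] X
  coact : X →ₗ[K] A ⊗[K] X

variable {K}
variable {A : Type v} [AddCommGroup A] [Module K A]
variable {X : Type w} [AddCommGroup X] [Module K X]
variable {Y : Type*} [AddCommGroup Y] [Module K Y]

/-- The multiplication as a map on the tensor square. -/
def XData.mulU (M : XData K A X) : X ⊗[K] X →ₗ[K] X := TensorProduct.lift M.mul

/-- The action as a map on the tensor product. -/
def XData.actU (M : XData K A X) : A ⊗[K] X →ₗ[K] X := TensorProduct.lift M.act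

/-- The braiding `c_{Y,X} : y ⊗ x ↦ (y₍₋₁₎ ▷ x) ⊗ y₍₀₎` of Yetter–Drinfeld modules. -/
def braidMap (coactY : Y →ₗ[K] A ⊗[K] Y) (actX : A →ₗ[K] X →ₗ[K] X) :
    Y ⊗[K] X →ₗ[K] X ⊗[K] Y :=
  (rTensor Y (TensorProduct.lift actX)) ∘ₗ
  (TensorProduct.assoc K A X Y).symm.toLinearMap ∘ₗ
  (lTensor A (TensorProduct.comm K Y X).toLinearMap) ∘ₗ
  (TensorProduct.assoc K A Y X).toLinearMap ∘ₗ
  (rTensor X coactY)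

/-- The inverse braiding `c⁻¹_{X,Y} : y ⊗ x ↦ x₍₀₎ ⊗ (S⁻¹(x₍₋₁₎) ▷ y)`. -/
def braidInvMap (coactX : X →ₗ[K] A ⊗[K] X) (actY : A →ₗ[K] Y →ₗ[K] Y)
    (Sinv : A →ₗ[K] A) : Y ⊗[K] X →ₗ[K] X ⊗[K] Y :=
  (lTensor X (TensorProduct.lift actY)) ∘ₗ
  (TensorProduct.assoc K X A Y).toLinearMap ∘ₗ
  (rTensor Y (TensorProduct.comm K A X).toLinearMap) ∘ₗ
  (rTensor Y (rTensor X Sinv)) ∘ₗ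
  (rTensor Y coactX) ∘ₗ
  (TensorProduct.comm K Y X).toLinearMap

/-- `x ⊗ y ↦ Σ (h₁ ▷ x) ⊗ (h₂ ▷ y)` for `h₁ ⊗ h₂` ranging over a tensor of the acting object. -/
def XData.actT (M : XData K A X) :
    (A ⊗[K] A) →ₗ[K] (X ⊗[K] X) →ₗ[K] (X ⊗[K] X) :=
  TensorProduct.lift (((TensorProduct.mapBilinear (RingHom.id K) X X X X).comp M.act).compl₂ M.act)

/-- The multiplication of the tensor-product algebra `A ⊗ X`. -/
def mulAX (G : GData K A) (M : XData K A X) :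
    (A ⊗[K] X) ⊗[K] (A ⊗[K] X) →ₗ[K] A ⊗[K] X :=
  (TensorProduct.map (TensorProduct.lift G.mul) M.mulU) ∘ₗ
    (TensorProduct.tensorTensorTensorComm K A X A X).toLinearMap

/-- Left side of the Yetter–Drinfeld condition: `h ⊗ x ↦ Σ (h₁ ▷ x)₍₋₁₎ h₂ ⊗ (h₁ ▷ x)₍₀₎`. -/
def ydL (G : GData K A) (M : XData K A X) : A ⊗[K] X →ₗ[K] A ⊗[K] X :=
  (rTensor X (TensorProduct.lift G.mul)) ∘ₗ
  (TensorProduct.assoc K A A X).symm.toLinearMap ∘ₗ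
  (lTensor A (TensorProduct.comm K X A).toLinearMap) ∘ₗ
  (TensorProduct.assoc K A X A).toLinearMap ∘ₗ
  (rTensor A (M.coact ∘ₗ M.actU)) ∘ₗ
  (TensorProduct.assoc K A X A).symm.toLinearMap ∘ₗ
  (lTensor A (TensorProduct.comm K A X).toLinearMap) ∘ₗ
  (TensorProduct.assoc K A A X).toLinearMap ∘ₗ
  (rTensor X G.comul)

/-- Right side of the Yetter–Drinfeld condition: `h ⊗ x ↦ Σ h₁ x₍₋₁₎ ⊗ (h₂ ▷ x₍₀₎)`. -/
def ydR (G : GData K A) (M : XData K A X) : A ⊗[K] X →ₗ[K] A ⊗[K] X :=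
  (TensorProduct.map (TensorProduct.lift G.mul) M.actU) ∘ₗ
  (TensorProduct.tensorTensorTensorComm K A A A X).toLinearMap ∘ₗ
  (TensorProduct.map G.comul M.coact)

/-- `X` (with the data `M`) is a left–left Yetter–Drinfeld module algebra over `A`
(with the bialgebra data `G`). -/
structure IsYDMA (G : GData K A) (M : XData K A X) : Prop where
  mul_assoc : ∀ x y z : X, M.mul (M.mul x y) z = M.mul x (M.mul y z)
  one_mul : ∀ x : X, M.mul M.one x = x
  mul_one : ∀ x : X, M.mul x M.one = x
  act_one : M.act G.one = LinearMap.id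
  act_mul : ∀ h g : A, M.act (G.mul h g) = (M.act h) ∘ₗ (M.act g)
  act_mul_distrib : ∀ h : A, (M.act h) ∘ₗ M.mulU = M.mulU ∘ₗ (M.actT (G.comul h))
  act_unit : ∀ h : A, M.act h M.one = G.counit h • M.one
  coassoc : (TensorProduct.assoc K A A X).toLinearMap ∘ₗ (rTensor X G.comul) ∘ₗ M.coact
      = (lTensor A M.coact) ∘ₗ M.coact
  counit_coact : ∀ x : X, (TensorProduct.lid K X) ((rTensor X G.counit) (M.coact x)) = x
  coact_mul : M.coact ∘ₗ M.mulU = (mulAX G M) ∘ₗ (TensorProduct.map M.coact M.coact)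
  coact_one : M.coact M.one = G.one ⊗ₜ[K] M.one
  yd : ydL G M = ydR G M

/-- Braided commutativity: `y x = (y₍₋₁₎ ▷ x) y₍₀₎`. -/
def XData.IsBraidedComm (M : XData K A X) : Prop :=
  ∀ x y : X, M.mul y x = M.mulU (braidMap M.coact M.act (y ⊗ₜ[K] x))

/-- Two Yetter–Drinfeld modules are braided symmetric:
`(y₍₋₁₎ ▷ x) ⊗ y₍₀₎ = x₍₀₎ ⊗ (S⁻¹(x₍₋₁₎) ▷ y)` for all `x, y`. -/
def BraidedSymm (MX : XData K A X) (MY : XData K A Y) (Sinv : A →ₗ[K] A) : Prop :=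
  ∀ (y : Y) (x : X),
    braidMap MY.coact MX.act (y ⊗ₜ[K] x)
      = braidInvMap MX.coact MY.act Sinv (y ⊗ₜ[K] x)

/-- The braided product `X ⋈ Y` of two Yetter–Drinfeld module algebras:
`(x ⋈ y)(v ⋈ u) = x (y₍₋₁₎ ▷ v) ⋈ y₍₀₎ u`, with the diagonal action and
codiagonal coaction. -/
def bp (G : GData K A) (MX : XData K A X) (MY : XData K A Y) :
    XData K A (X ⊗[K] Y) where
  mul := TensorProduct.lift
    (((LinearMap.llcomp K (X ⊗[K] Y) (X ⊗[K] Y) (X ⊗[K] Y)).comp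
        ((LinearMap.rTensorHom Y).comp MX.mul)).compl₂
      ((TensorProduct.lift
          (((TensorProduct.mapBilinear (RingHom.id K) X Y X Y).comp MX.act).compl₂ MY.mul)).comp
        MY.coact))
  one := MX.one ⊗ₜ[K] MY.one
  act := (TensorProduct.lift
      (((TensorProduct.mapBilinear (RingHom.id K) X Y X Y).comp MX.act).compl₂ MY.act)).comp
      G.comul
  coact := (rTensor (X ⊗[K] Y) (TensorProduct.lift G.mul)) ∘ₗ
    (TensorProduct.tensorTensorTensorComm K A X A Y).toLinearMap ∘ₗ
    (TensorProduct.map MX.coact MY.coact)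

/-- The bialgebra data of a Hopf algebra. -/
def GData.ofHopf (K H : Type*) [Field K] [Ring H] [HopfAlgebra K H] : GData K H :=
  ⟨LinearMap.mul K H, 1, Coalgebra.comul, Coalgebra.counit⟩

end AbstractLayer

section Evaluation

variable {K A X Y : Type*} [Field K] [AddCommGroup A] [Module K A]
  [AddCommGroup X] [Module K X] [AddCommGroup Y] [Module K Y]

theorem braidMap_tmul (coactY : Y →ₗ[K] A ⊗[K] Y) (actX : A →ₗ[K] X →ₗ[K] X) (y : Y) (x : X) :
    braidMap coactY actX (y ⊗ₜ x) = rTensor Y (actX.flip x) (coactY y) := by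
  simp only [braidMap, coe_comp, Function.comp_apply, rTensor_tmul, LinearEquiv.coe_coe]
  induction coactY y using TensorProduct.induction_on with
  | zero => simp
  | tmul a b => simp
  | add s t hs ht => simp only [map_add, add_tmul, hs, ht]

theorem braidInvMap_tmul (coactX : X →ₗ[K] A ⊗[K] X) (actY : A →ₗ[K] Y →ₗ[K] Y)
    (Sinv : A →ₗ[K] A) (y : Y) (x : X) :
    braidInvMap coactX actY Sinv (y ⊗ₜ x)
      = lTensor X (actY.flip y ∘ₗ Sinv) (TensorProduct.comm K A X (coactX x)) := by
  simp only [braidInvMap, coe_comp, Function.comp_apply, LinearEquiv.coe_coe, comm_tmul,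
    rTensor_tmul]
  induction coactX x using TensorProduct.induction_on with
  | zero => simp
  | tmul a b => simp
  | add s t hs ht => simp only [map_add, add_tmul, hs, ht]

theorem XData.actT_tmul (M : XData K A X) (t : A ⊗[K] A) (x x' : X) :
    M.actT t (x ⊗ₜ x') = map (M.act.flip x) (M.act.flip x') t := by
  induction t using TensorProduct.induction_on with
  | zero => simp
  | tmul a b => simp [XData.actT]
  | add s t hs ht => simp only [map_add, LinearMap.add_apply, hs, ht]

variable (G : GData K A) (MX : XData K A X) (MY : XData K A Y)

theorem bp_one : (bp G MX MY).one = MX.one ⊗ₜ MY.one := rfl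

theorem bp_act_tmul (h : A) (x : X) (y : Y) :
    (bp G MX MY).act h (x ⊗ₜ y) = map (MX.act.flip x) (MY.act.flip y) (G.comul h) := by
  simp only [bp, coe_comp, Function.comp_apply]
  induction G.comul h using TensorProduct.induction_on with
  | zero => simp
  | tmul a b => simp
  | add s t hs ht => simp only [map_add, LinearMap.add_apply, hs, ht]

theorem bp_coact_tmul (x : X) (y : Y) :
    (bp G MX MY).coact (x ⊗ₜ y) = rTensor (X ⊗[K] Y) (TensorProduct.lift G.mul)
      (tensorTensorTensorComm K A X A Y (MX.coact x ⊗ₜ MY.coact y)) := rfl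

theorem bp_mul_tmul (x v : X) (y u : Y) :
    (bp G MX MY).mul (x ⊗ₜ y) (v ⊗ₜ u)
      = rTensor Y (MX.mul x) (lTensor X (MY.mul.flip u) (braidMap MY.coact MX.act (y ⊗ₜ v))) := by
  rw [braidMap_tmul]
  simp only [bp, TensorProduct.lift.tmul, coe_comp, Function.comp_apply, compl₂_apply,
    llcomp_apply, coe_rTensorHom]
  induction MY.coact y using TensorProduct.induction_on with
  | zero => simp
  | tmul a b => simp [TensorProduct.mapBilinear_apply]
  | add s t hs ht => simp only [map_add, LinearMap.add_apply, hs, ht]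

end Evaluation

namespace IsYDMA

variable {K A X Z : Type*} [Field K] [AddCommGroup A] [Module K A]
  [AddCommGroup X] [Module K X] [AddCommGroup Z] [Module K Z]
  {G : GData K A} {M : XData K A X}

theorem act_one_apply (hM : IsYDMA G M) (x : X) : M.act G.one x = x := by
  rw [hM.act_one, LinearMap.id_apply]

theorem act_mul_apply (hM : IsYDMA G M) (h g : A) (x : X) :
    M.act (G.mul h g) x = M.act h (M.act g x) := by
  rw [hM.act_mul, LinearMap.comp_apply]

theorem act_mul_comul (hM : IsYDMA G M) (h : A) (x x' : X) :
    M.act h (M.mul x x') = M.mulU (map (M.act.flip x) (M.act.flip x') (G.comul h)) := by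
  rw [← XData.actT_tmul]
  exact LinearMap.congr_fun (hM.act_mul_distrib h) (x ⊗ₜ x')

theorem rTensor_comp_comul_coact (hM : IsYDMA G M) (f : A ⊗[K] A →ₗ[K] Z) (x : X) :
    rTensor X (f ∘ₗ G.comul) (M.coact x)
      = rTensor X f ((TensorProduct.assoc K A A X).symm (lTensor A M.coact (M.coact x))) := by
  have hx := LinearMap.congr_fun hM.coassoc x
  simp only [coe_comp, Function.comp_apply, LinearEquiv.coe_coe] at hx
  rw [← hx, LinearEquiv.symm_apply_apply, rTensor_comp, LinearMap.comp_apply]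

theorem rTensor_comp_counit_coact (hM : IsYDMA G M) (g : K →ₗ[K] Z) (x : X) :
    rTensor X (g ∘ₗ G.counit) (M.coact x) = g 1 ⊗ₜ x := by
  conv_rhs => rw [← hM.counit_coact x]
  induction M.coact x using TensorProduct.induction_on with
  | zero => simp
  | tmul a x' =>
    rw [rTensor_tmul, rTensor_tmul, lid_tmul, ← smul_tmul, ← map_smul, smul_eq_mul, _root_.mul_one,
      LinearMap.comp_apply]
  | add s t hs ht => simp only [map_add, tmul_add, hs, ht]

end IsYDMA

section Braiding

variable {K A X Y : Type*} [Field K] [AddCommGroup A] [Module K A]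
  [AddCommGroup X] [Module K X] [AddCommGroup Y] [Module K Y]
  {G : GData K A} {MX : XData K A X} {MY : XData K A Y}

theorem braidMap_bp_one (hX : IsYDMA G MX) (hY : IsYDMA G MY) :
    braidMap MX.coact MY.act (bp G MX MY).one = (bp G MY MX).one := by
  rw [bp_one, bp_one, braidMap_tmul, hX.coact_one, rTensor_tmul, flip_apply, hY.act_one_apply]

theorem braidMap_bp_act_tmul (hY : IsYDMA G MY) (h : A) (x : X) (y : Y) :
    braidMap MX.coact MY.act ((bp G MX MY).act h (x ⊗ₜ y))
      = rTensor X (MY.act.flip y) (ydL G MX (h ⊗ₜ x)) := by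
  rw [bp_act_tmul]
  simp only [ydL, coe_comp, Function.comp_apply, LinearEquiv.coe_coe, rTensor_tmul]
  induction G.comul h using TensorProduct.induction_on with
  | zero => simp
  | tmul a b =>
    simp only [map_tmul, flip_apply, braidMap_tmul, assoc_tmul, lTensor_tmul, comm_tmul,
      assoc_symm_tmul, rTensor_tmul, coe_comp, Function.comp_apply, LinearEquiv.coe_coe,
      XData.actU, lift.tmul]
    induction MX.coact (MX.act a x) using TensorProduct.induction_on with
    | zero => simp
    | tmul c x' => simp [hY.act_mul_apply]
    | add s t hs ht => simp only [map_add, add_tmul, hs, ht]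
  | add s t hs ht => simp only [map_add, add_tmul, hs, ht]

theorem bp_act_braidMap_tmul (hY : IsYDMA G MY) (h : A) (x : X) (y : Y) :
    (bp G MY MX).act h (braidMap MX.coact MY.act (x ⊗ₜ y))
      = rTensor X (MY.act.flip y) (ydR G MX (h ⊗ₜ x)) := by
  simp only [braidMap_tmul, ydR, coe_comp, Function.comp_apply, LinearEquiv.coe_coe, map_tmul]
  induction MX.coact x using TensorProduct.induction_on with
  | zero => simp
  | tmul c x' =>
    rw [rTensor_tmul, flip_apply, bp_act_tmul]
    induction G.comul h using TensorProduct.induction_on with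
    | zero => simp
    | tmul a b => simp [XData.actU, hY.act_mul_apply]
    | add s t hs ht => simp only [map_add, add_tmul, hs, ht]
  | add s t hs ht => simp only [map_add, tmul_add, hs, ht]

theorem braidMap_comp_bp_act (hX : IsYDMA G MX) (hY : IsYDMA G MY) (h : A) :
    braidMap MX.coact MY.act ∘ₗ (bp G MX MY).act h
      = (bp G MY MX).act h ∘ₗ braidMap MX.coact MY.act :=
  TensorProduct.ext' fun x y => by
    rw [comp_apply, comp_apply, braidMap_bp_act_tmul hY, bp_act_braidMap_tmul hY, hX.yd]

theorem bp_coact_braidMap_tmul (hX : IsYDMA G MX) (x : X) (y : Y) :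
    (bp G MY MX).coact (braidMap MX.coact MY.act (x ⊗ₜ y))
      = TensorProduct.assoc K A Y X
          (rTensor X (ydL G MY ∘ₗ (TensorProduct.mk K A Y).flip y) (MX.coact x)) := by
  -- `f (a ⊗ b) = (a ▷ y)₍₋₁₎ b ⊗ (a ▷ y)₍₀₎`
  let f : A ⊗[K] A →ₗ[K] A ⊗[K] Y :=
    rTensor Y (lift G.mul) ∘ₗ (TensorProduct.assoc K A A Y).symm.toLinearMap ∘ₗ
      lTensor A (TensorProduct.comm K Y A).toLinearMap ∘ₗ
      (TensorProduct.assoc K A Y A).toLinearMap ∘ₗ rTensor A (MY.coact ∘ₗ MY.act.flip y)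
  have hf : ydL G MY ∘ₗ (TensorProduct.mk K A Y).flip y = f ∘ₗ G.comul := by
    ext h
    simp only [ydL, f, coe_comp, Function.comp_apply, LinearEquiv.coe_coe, flip_apply,
      mk_apply, rTensor_tmul]
    induction G.comul h using TensorProduct.induction_on with
    | zero => simp
    | tmul a b => simp [XData.actU]
    | add s t hs ht => simp only [map_add, add_tmul, hs, ht]
  rw [hf, hX.rTensor_comp_comul_coact, braidMap_tmul]
  induction MX.coact x using TensorProduct.induction_on with
  | zero => simp
  | tmul a x' =>
    simp only [rTensor_tmul, lTensor_tmul, flip_apply, bp_coact_tmul]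
    induction MX.coact x' using TensorProduct.induction_on with
    | zero => simp
    | tmul b v =>
      simp only [f, coe_comp, Function.comp_apply, LinearEquiv.coe_coe, assoc_symm_tmul,
        rTensor_tmul, flip_apply]
      induction MY.coact (MY.act a y) using TensorProduct.induction_on with
      | zero => simp
      | tmul c w => simp
      | add s t hs ht => simp only [map_add, add_tmul, hs, ht]
    | add s t hs ht => simp only [map_add, tmul_add, hs, ht]
  | add s t hs ht => simp only [map_add, hs, ht]

theorem lTensor_braidMap_bp_coact_tmul (hX : IsYDMA G MX) (x : X) (y : Y) :
    lTensor A (braidMap MX.coact MY.act) ((bp G MX MY).coact (x ⊗ₜ y))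
      = TensorProduct.assoc K A Y X
          (rTensor X (ydR G MY ∘ₗ (TensorProduct.mk K A Y).flip y) (MX.coact x)) := by
  -- `f (a ⊗ b) = a y₍₋₁₎ ⊗ b ▷ y₍₀₎`
  let f : A ⊗[K] A →ₗ[K] A ⊗[K] Y :=
    map (lift G.mul) MY.actU ∘ₗ (tensorTensorTensorComm K A A A Y).toLinearMap ∘ₗ
      (TensorProduct.mk K (A ⊗[K] A) (A ⊗[K] Y)).flip (MY.coact y)
  have hf : ydR G MY ∘ₗ (TensorProduct.mk K A Y).flip y = f ∘ₗ G.comul := rfl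
  rw [hf, hX.rTensor_comp_comul_coact, bp_coact_tmul]
  induction MX.coact x using TensorProduct.induction_on with
  | zero => simp
  | tmul a x' =>
    simp only [f, lTensor_tmul]
    induction MY.coact y using TensorProduct.induction_on with
    | zero => simp
    | tmul c w =>
      simp only [tensorTensorTensorComm_tmul, rTensor_tmul, lTensor_tmul, braidMap_tmul]
      induction MX.coact x' using TensorProduct.induction_on with
      | zero => simp
      | tmul b v => simp [XData.actU]
      | add s t hs ht => simp only [map_add, tmul_add, hs, ht]
    | add s t hs ht =>
      simp only [map_add, tmul_add, LinearMap.add_apply, LinearMap.comp_add,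
        LinearMap.rTensor_add, hs, ht]
  | add s t hs ht => simp only [map_add, add_tmul, hs, ht]

theorem bp_coact_comp_braidMap (hX : IsYDMA G MX) (hY : IsYDMA G MY) :
    (bp G MY MX).coact ∘ₗ braidMap MX.coact MY.act
      = lTensor A (braidMap MX.coact MY.act) ∘ₗ (bp G MX MY).coact :=
  TensorProduct.ext' fun x y => by
    rw [comp_apply, comp_apply, bp_coact_braidMap_tmul hX, lTensor_braidMap_bp_coact_tmul hX,
      hY.yd]

/-- `w ⊗ v ↦ (x₍₋₁₎ ▷ w) ⊗ x₍₀₎ v`. -/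
def braidMulLeft (MX : XData K A X) (actY : A →ₗ[K] Y →ₗ[K] Y) (x : X) :
    Y ⊗[K] X →ₗ[K] Y ⊗[K] X :=
  lTensor Y MX.mulU ∘ₗ (TensorProduct.assoc K Y X X).toLinearMap ∘ₗ
    rTensor X (braidMap MX.coact actY ∘ₗ TensorProduct.mk K X Y x)

theorem braidMulLeft_tmul (actY : A →ₗ[K] Y →ₗ[K] Y) (x : X) (w : Y) (v : X) :
    braidMulLeft MX actY x (w ⊗ₜ v)
      = lTensor Y (MX.mul.flip v) (rTensor X (actY.flip w) (MX.coact x)) := by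
  simp only [braidMulLeft, coe_comp, Function.comp_apply, rTensor_tmul, mk_apply,
    braidMap_tmul, LinearEquiv.coe_coe]
  induction MX.coact x using TensorProduct.induction_on with
  | zero => simp
  | tmul a x' => simp [XData.mulU]
  | add s t hs ht => simp only [map_add, add_tmul, hs, ht]

theorem braidMap_comp_rTensor_mul (hX : IsYDMA G MX) (hY : IsYDMA G MY) (x : X) :
    braidMap MX.coact MY.act ∘ₗ rTensor Y (MX.mul x)
      = braidMulLeft MX MY.act x ∘ₗ braidMap MX.coact MY.act := by
  refine TensorProduct.ext' fun v w => ?_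
  have hxv : MX.coact (MX.mul x v) = mulAX G MX (MX.coact x ⊗ₜ MX.coact v) :=
    LinearMap.congr_fun hX.coact_mul (x ⊗ₜ v)
  simp only [comp_apply, rTensor_tmul, braidMap_tmul, hxv, mulAX]
  induction MX.coact v using TensorProduct.induction_on with
  | zero => simp
  | tmul b v' =>
    rw [rTensor_tmul, flip_apply, braidMulLeft_tmul]
    induction MX.coact x using TensorProduct.induction_on with
    | zero => simp
    | tmul a x' => simp [XData.mulU, hY.act_mul_apply]
    | add s t hs ht => simp only [map_add, add_tmul, hs, ht]
  | add s t hs ht => simp only [map_add, tmul_add, hs, ht]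

theorem bp_mul_braidMap_tmul (hX : IsYDMA G MX) (hY : IsYDMA G MY) (x : X) (w : Y) :
    (bp G MY MX).mul (braidMap MX.coact MY.act (x ⊗ₜ w))
      = braidMulLeft MX MY.act x ∘ₗ rTensor X (MY.mul w) := by
  have hww' : ∀ w', MY.act.flip (MY.mul w w')
      = (MY.mulU ∘ₗ map (MY.act.flip w) (MY.act.flip w')) ∘ₗ G.comul :=
    fun w' => LinearMap.ext fun h => hY.act_mul_comul h w w'
  refine TensorProduct.ext' fun w' v => ?_
  rw [comp_apply, rTensor_tmul, braidMulLeft_tmul, hww', hX.rTensor_comp_comul_coact,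
    braidMap_tmul]
  induction MX.coact x using TensorProduct.induction_on with
  | zero => simp
  | tmul a x' =>
    rw [rTensor_tmul, flip_apply, bp_mul_tmul, braidMap_tmul, lTensor_tmul]
    induction MX.coact x' using TensorProduct.induction_on with
    | zero => simp
    | tmul b v' => simp [XData.mulU]
    | add s t hs ht => simp only [map_add, tmul_add, hs, ht]
  | add s t hs ht => simp only [map_add, LinearMap.add_apply, hs, ht]

end Braiding

section Hopf

variable {K H X Y : Type*} [Field K] [Ring H] [HopfAlgebra K H]
  [AddCommGroup X] [Module K X] [AddCommGroup Y] [Module K Y]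
  {MX : XData K H X} {MY : XData K H Y} {Sinv : H →ₗ[K] H}

theorem GData.ofHopf_comul : (GData.ofHopf K H).comul = Coalgebra.comul := rfl
theorem GData.ofHopf_counit : (GData.ofHopf K H).counit = Coalgebra.counit := rfl

theorem mul'_comm_rTensor_comul_of_antipode_inv (hS : Sinv ∘ₗ HopfAlgebra.antipode K = .id)
    (hS' : HopfAlgebra.antipode K ∘ₗ Sinv = .id) :
    mul' K H ∘ₗ (TensorProduct.comm K H H).toLinearMap ∘ₗ rTensor H Sinv ∘ₗ Coalgebra.comul
      = Algebra.linearMap K H ∘ₗ Coalgebra.counit := by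
  have hSSinv (a : H) : HopfAlgebra.antipode K (Sinv a) = a := LinearMap.congr_fun hS' a
  have hanti (t : H ⊗[K] H) :
      HopfAlgebra.antipode K (mul' K H (TensorProduct.comm K H H (rTensor H Sinv t)))
        = mul' K H (lTensor H (HopfAlgebra.antipode K) t) := by
    induction t using TensorProduct.induction_on with
    | zero => simp
    | tmul a b => simp [HopfAlgebra.antipode_mul_antidistrib, hSSinv]
    | add s t hs ht => simp only [map_add, hs, ht]
  have hinj : Function.Injective (HopfAlgebra.antipode K (A := H)) :=
    Function.LeftInverse.injective fun a => LinearMap.congr_fun hS a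
  ext h
  apply hinj
  simp only [comp_apply, LinearEquiv.coe_coe, hanti, HopfAlgebra.mul_antipode_lTensor_comul_apply,
    Algebra.linearMap_apply, Algebra.algebraMap_eq_smul_one, map_smul, HopfAlgebra.antipode_one]

theorem mul'_comm_lTensor_comul_of_antipode_inv (hS : Sinv ∘ₗ HopfAlgebra.antipode K = .id)
    (hS' : HopfAlgebra.antipode K ∘ₗ Sinv = .id) :
    mul' K H ∘ₗ (TensorProduct.comm K H H).toLinearMap ∘ₗ lTensor H Sinv ∘ₗ Coalgebra.comul
      = Algebra.linearMap K H ∘ₗ Coalgebra.counit := by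
  have hSSinv (a : H) : HopfAlgebra.antipode K (Sinv a) = a := LinearMap.congr_fun hS' a
  have hanti (t : H ⊗[K] H) :
      HopfAlgebra.antipode K (mul' K H (TensorProduct.comm K H H (lTensor H Sinv t)))
        = mul' K H (rTensor H (HopfAlgebra.antipode K) t) := by
    induction t using TensorProduct.induction_on with
    | zero => simp
    | tmul a b => simp [HopfAlgebra.antipode_mul_antidistrib, hSSinv]
    | add s t hs ht => simp only [map_add, hs, ht]
  have hinj : Function.Injective (HopfAlgebra.antipode K (A := H)) :=
    Function.LeftInverse.injective fun a => LinearMap.congr_fun hS a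
  ext h
  apply hinj
  simp only [comp_apply, LinearEquiv.coe_coe, hanti, HopfAlgebra.mul_antipode_rTensor_comul_apply,
    Algebra.linearMap_apply, Algebra.algebraMap_eq_smul_one, map_smul, HopfAlgebra.antipode_one]

theorem IsYDMA.act_one_apply_ofHopf (hY : IsYDMA (GData.ofHopf K H) MY) (y : Y) :
    MY.act 1 y = y :=
  hY.act_one_apply y

theorem IsYDMA.act_mul_apply_ofHopf (hY : IsYDMA (GData.ofHopf K H) MY) (g h : H) (y : Y) :
    MY.act (g * h) y = MY.act g (MY.act h y) :=
  hY.act_mul_apply g h y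

def twistedAct (MY : XData K H Y) (Sinv : H →ₗ[K] H) (y u : Y) : H ⊗[K] H →ₗ[K] Y :=
  lift MY.act ∘ₗ (TensorProduct.comm K Y H).toLinearMap ∘ₗ
    rTensor H (MY.mul.flip u ∘ₗ MY.act.flip y ∘ₗ Sinv)

theorem twistedAct_tmul (y u : Y) (a b : H) :
    twistedAct MY Sinv y u (a ⊗ₜ b) = MY.act b (MY.mul (MY.act (Sinv a) y) u) := by
  simp [twistedAct]

theorem IsYDMA.twistedAct_comp_comul (hY : IsYDMA (GData.ofHopf K H) MY)
    (hS : Sinv ∘ₗ HopfAlgebra.antipode K = .id) (hS' : HopfAlgebra.antipode K ∘ₗ Sinv = .id)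
    (y u : Y) :
    twistedAct MY Sinv y u ∘ₗ Coalgebra.comul = MY.mul y ∘ₗ MY.act.flip u := by
  -- `b ▷ ((S⁻¹ a ▷ y) u) = (b₍₁₎ S⁻¹(a) ▷ y) (b₍₂₎ ▷ u)`
  have hsplit : twistedAct MY Sinv y u
      = (MY.mulU ∘ₗ map (MY.act.flip y) (MY.act.flip u)) ∘ₗ
        rTensor H (mul' K H ∘ₗ (TensorProduct.comm K H H).toLinearMap ∘ₗ rTensor H Sinv) ∘ₗ
        (TensorProduct.assoc K H H H).symm.toLinearMap ∘ₗ lTensor H Coalgebra.comul := by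
    refine TensorProduct.ext' fun a b => ?_
    rw [twistedAct_tmul, hY.act_mul_comul]
    simp only [comp_apply, lTensor_tmul, LinearEquiv.coe_coe, GData.ofHopf_comul]
    induction Coalgebra.comul (R := K) b using TensorProduct.induction_on with
    | zero => simp
    | tmul b₁ b₂ =>
      simp [XData.mulU, hY.act_mul_apply_ofHopf]
    | add s t hs ht => simp only [map_add, tmul_add, hs, ht]
  ext g
  -- `g₍₂₎ S⁻¹(g₍₁₎) ⊗ g₍₃₎ = 1 ⊗ g`
  have hunit : rTensor H (mul' K H ∘ₗ (TensorProduct.comm K H H).toLinearMap ∘ₗ rTensor H Sinv)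
      (rTensor H Coalgebra.comul (Coalgebra.comul g)) = 1 ⊗ₜ g := by
    rw [← rTensor_comp_apply, LinearMap.comp_assoc, LinearMap.comp_assoc,
      mul'_comm_rTensor_comul_of_antipode_inv hS hS', rTensor_comp_apply,
      Coalgebra.rTensor_counit_comul]
    simp
  rw [hsplit]
  simp only [comp_apply, LinearEquiv.coe_coe, Coalgebra.coassoc_symm_apply, hunit]
  simp [XData.mulU, hY.act_one_apply_ofHopf]

theorem braidMap_lTensor_braidInvMap
    (hX : IsYDMA (GData.ofHopf K H) MX) (hY : IsYDMA (GData.ofHopf K H) MY)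
    (hS : Sinv ∘ₗ HopfAlgebra.antipode K = .id) (hS' : HopfAlgebra.antipode K ∘ₗ Sinv = .id)
    (y u : Y) (v : X) :
    braidMap MX.coact MY.act
        (lTensor X (MY.mul.flip u) (braidInvMap MX.coact MY.act Sinv (y ⊗ₜ v)))
      = rTensor X (MY.mul y) (braidMap MX.coact MY.act (v ⊗ₜ u)) := by
  have hv := hX.rTensor_comp_comul_coact (twistedAct MY Sinv y u) v
  rw [GData.ofHopf_comul, hY.twistedAct_comp_comul hS hS', rTensor_comp_apply] at hv
  rw [braidMap_tmul _ _ v, hv, braidInvMap_tmul]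
  induction MX.coact v using TensorProduct.induction_on with
  | zero => simp
  | tmul a v' =>
    simp only [comm_tmul, lTensor_tmul, comp_apply, flip_apply, braidMap_tmul]
    induction MX.coact v' using TensorProduct.induction_on with
    | zero => simp
    | tmul b v'' => simp [twistedAct_tmul]
    | add s t hs ht => simp only [map_add, tmul_add, hs, ht]
  | add s t hs ht => simp only [map_add, hs, ht]

theorem braidInvMap_braidMap
    (hX : IsYDMA (GData.ofHopf K H) MX) (hY : IsYDMA (GData.ofHopf K H) MY)
    (hS : Sinv ∘ₗ HopfAlgebra.antipode K = .id) (hS' : HopfAlgebra.antipode K ∘ₗ Sinv = .id)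
    (x : X) (y : Y) :
    braidInvMap MX.coact MY.act Sinv (braidMap MX.coact MY.act (x ⊗ₜ y)) = x ⊗ₜ y := by
  have hx := hX.rTensor_comp_comul_coact
    (MY.act.flip y ∘ₗ mul' K H ∘ₗ (TensorProduct.comm K H H).toLinearMap ∘ₗ lTensor H Sinv) x
  rw [GData.ofHopf_comul, comp_assoc, comp_assoc, comp_assoc,
    mul'_comm_lTensor_comul_of_antipode_inv hS hS', ← comp_assoc, ← GData.ofHopf_counit,
    hX.rTensor_comp_counit_coact] at hx
  simp only [comp_apply, Algebra.linearMap_apply, map_one, flip_apply,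
    hY.act_one_apply_ofHopf] at hx
  -- `hx : y ⊗ x = S⁻¹(x₍₀₎₍₋₁₎) x₍₋₁₎ ▷ y ⊗ x₍₀₎₍₀₎`
  rw [braidMap_tmul, show x ⊗ₜ[K] y = TensorProduct.comm K Y X (y ⊗ₜ x) from rfl, hx]
  induction MX.coact x using TensorProduct.induction_on with
  | zero => simp
  | tmul a x' =>
    simp only [rTensor_tmul, lTensor_tmul, flip_apply, braidInvMap_tmul]
    induction MX.coact x' using TensorProduct.induction_on with
    | zero => simp
    | tmul b x'' => simp [hY.act_mul_apply_ofHopf]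
    | add s t hs ht => simp only [map_add, tmul_add, hs, ht]
  | add s t hs ht => simp only [map_add, hs, ht]

theorem braidMap_braidInvMap
    (hX : IsYDMA (GData.ofHopf K H) MX) (hY : IsYDMA (GData.ofHopf K H) MY)
    (hS : Sinv ∘ₗ HopfAlgebra.antipode K = .id) (hS' : HopfAlgebra.antipode K ∘ₗ Sinv = .id)
    (y : Y) (x : X) :
    braidMap MX.coact MY.act (braidInvMap MX.coact MY.act Sinv (y ⊗ₜ x)) = y ⊗ₜ x := by
  have hx := hX.rTensor_comp_comul_coact
    (MY.act.flip y ∘ₗ mul' K H ∘ₗ (TensorProduct.comm K H H).toLinearMap ∘ₗ rTensor H Sinv) x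
  rw [GData.ofHopf_comul, comp_assoc, comp_assoc, comp_assoc,
    mul'_comm_rTensor_comul_of_antipode_inv hS hS', ← comp_assoc, ← GData.ofHopf_counit,
    hX.rTensor_comp_counit_coact] at hx
  simp only [comp_apply, Algebra.linearMap_apply, map_one, flip_apply,
    hY.act_one_apply_ofHopf] at hx
  -- `hx : y ⊗ x = x₍₀₎₍₋₁₎ S⁻¹(x₍₋₁₎) ▷ y ⊗ x₍₀₎₍₀₎`
  rw [braidInvMap_tmul, hx]
  induction MX.coact x using TensorProduct.induction_on with
  | zero => simp
  | tmul a x' =>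
    simp only [comm_tmul, lTensor_tmul, comp_apply, flip_apply, braidMap_tmul]
    induction MX.coact x' using TensorProduct.induction_on with
    | zero => simp
    | tmul b x'' => simp [hY.act_mul_apply_ofHopf]
    | add s t hs ht => simp only [map_add, tmul_add, hs, ht]
  | add s t hs ht => simp only [map_add, hs, ht]

theorem braidMap_bijective
    (hX : IsYDMA (GData.ofHopf K H) MX) (hY : IsYDMA (GData.ofHopf K H) MY)
    (hS : Sinv ∘ₗ HopfAlgebra.antipode K = .id) (hS' : HopfAlgebra.antipode K ∘ₗ Sinv = .id) :
    Function.Bijective (braidMap MX.coact MY.act) := by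
  have hleft : braidInvMap MX.coact MY.act Sinv ∘ₗ braidMap MX.coact MY.act = .id :=
    TensorProduct.ext' (braidInvMap_braidMap hX hY hS hS')
  have hright : braidMap MX.coact MY.act ∘ₗ braidInvMap MX.coact MY.act Sinv = .id :=
    TensorProduct.ext' (braidMap_braidInvMap hX hY hS hS')
  exact Function.bijective_iff_has_inverse.mpr ⟨braidInvMap MX.coact MY.act Sinv,
    LinearMap.congr_fun hleft, LinearMap.congr_fun hright⟩

theorem braidMap_bp_mul
    (hX : IsYDMA (GData.ofHopf K H) MX) (hY : IsYDMA (GData.ofHopf K H) MY)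
    (hS : Sinv ∘ₗ HopfAlgebra.antipode K = .id) (hS' : HopfAlgebra.antipode K ∘ₗ Sinv = .id)
    (hsym : BraidedSymm MX MY Sinv) (s t : X ⊗[K] Y) :
    braidMap MX.coact MY.act ((bp (GData.ofHopf K H) MX MY).mul s t)
      = (bp (GData.ofHopf K H) MY MX).mul
          (braidMap MX.coact MY.act s) (braidMap MX.coact MY.act t) := by
  induction s using TensorProduct.induction_on with
  | zero => simp
  | add s s' hs hs' => simp only [map_add, LinearMap.add_apply, hs, hs']
  | tmul x y =>
    induction t using TensorProduct.induction_on with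
    | zero => simp
    | add t t' ht ht' => simp only [map_add, ht, ht']
    | tmul v u =>
      calc braidMap MX.coact MY.act ((bp (GData.ofHopf K H) MX MY).mul (x ⊗ₜ y) (v ⊗ₜ u))
          = braidMap MX.coact MY.act (rTensor Y (MX.mul x)
              (lTensor X (MY.mul.flip u) (braidInvMap MX.coact MY.act Sinv (y ⊗ₜ v)))) := by
            rw [bp_mul_tmul, hsym]
        _ = braidMulLeft MX MY.act x (braidMap MX.coact MY.act
              (lTensor X (MY.mul.flip u) (braidInvMap MX.coact MY.act Sinv (y ⊗ₜ v)))) :=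
            LinearMap.congr_fun (braidMap_comp_rTensor_mul hX hY x) _
        _ = braidMulLeft MX MY.act x
              (rTensor X (MY.mul y) (braidMap MX.coact MY.act (v ⊗ₜ u))) := by
            rw [braidMap_lTensor_braidInvMap hX hY hS hS']
        _ = _ := (LinearMap.congr_fun (bp_mul_braidMap_tmul hX hY x y) _).symm

end Hopf

variable {K : Type u} [Field K]
variable {H : Type v} [Ring H] [HopfAlgebra K H]
variable {X : Type w} [AddCommGroup X] [Module K X]
variable {Y : Type*} [AddCommGroup Y] [Module K Y]

/-- For braided symmetric Yetter–Drinfeld `H`-module algebras `X`, `Y`,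
the map `φ : X ⋈ Y → Y ⋈ X`, `φ(x ⋈ y) = (x₍₋₁₎ ▷ y) ⋈ x₍₀₎`, is an isomorphism of
Yetter–Drinfeld `H`-module algebras: an algebra map, an `H`-module map, a comodule map,
and bijective. -/
theorem braided_product_flip_iso
    (Sinv : H →ₗ[K] H)
    (hS : Sinv ∘ₗ HopfAlgebra.antipode (R := K) = LinearMap.id)
    (hS' : HopfAlgebra.antipode (R := K) ∘ₗ Sinv = LinearMap.id)
    (MX : XData K H X) (MY : XData K H Y)
    (hX : IsYDMA (GData.ofHopf K H) MX) (hY : IsYDMA (GData.ofHopf K H) MY)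
    (hsym : BraidedSymm MX MY Sinv) :
    -- φ := braiding c_{X,Y} : x ⊗ y ↦ (x₍₋₁₎ ▷ y) ⊗ x₍₀₎
    (∀ s t : X ⊗[K] Y,
        braidMap MX.coact MY.act ((bp (GData.ofHopf K H) MX MY).mul s t)
          = (bp (GData.ofHopf K H) MY MX).mul
              (braidMap MX.coact MY.act s) (braidMap MX.coact MY.act t))
    ∧ braidMap MX.coact MY.act ((bp (GData.ofHopf K H) MX MY).one)
        = (bp (GData.ofHopf K H) MY MX).one
    ∧ (∀ h : H,
        (braidMap MX.coact MY.act) ∘ₗ ((bp (GData.ofHopf K H) MX MY).act h)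
          = ((bp (GData.ofHopf K H) MY MX).act h) ∘ₗ (braidMap MX.coact MY.act))
    ∧ ((bp (GData.ofHopf K H) MY MX).coact ∘ₗ (braidMap MX.coact MY.act)
        = (lTensor H (braidMap MX.coact MY.act)) ∘ₗ (bp (GData.ofHopf K H) MX MY).coact)
    ∧ Function.Bijective (braidMap MX.coact MY.act) :=
  ⟨braidMap_bp_mul hX hY hS hS' hsym, braidMap_bp_one hX hY, braidMap_comp_bp_act hX hY,
    bp_coact_comp_braidMap hX hY, braidMap_bijective hX hY hS hS'⟩

end
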